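/- The prism Σ₂, defined as the convex hull in ℂ×ℝ ≅ ℝ³ of the six points (1−(√2/2)i, √2), (1+(√2/2)i, √2), (−1+(√2/2)i, √2), (1−(√2/2)i, −√2), (1+(√2/2)i, −√2), (−1+(√2/2)i, −√2), is contained in the union of the six open Cygan balls B((0,0), 2), B((1,0), 1), B((1, 2√2), 1), B((1, −2√2), 1), B((−1, 0), 1) and B((−1, −2√2), 1). -/

import Mathlib

noncomputable section

open Complex

/-- The open Cygan ball of squared radius `s` centred at `(ζ₀, t₀)` in the Heisenberg
group `ℂ × ℝ`:  `{(ζ,t) : | |ζ−ζ₀|² + i(t−t₀) + 2i·Im(ζ·conj ζ₀) | < s}`. -/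
def cyganBall (ζ₀ : ℂ) (t₀ : ℝ) (s : ℝ) : Set (ℂ × ℝ) :=
  {p | ‖(((‖p.1 - ζ₀‖ ^ 2 : ℝ) : ℂ)
        + Complex.I * ((p.2 - t₀ : ℝ) : ℂ)
        + 2 * Complex.I * (((p.1 * (starRingEnd ℂ) ζ₀).im : ℝ) : ℂ))‖ < s}

/-- The fundamental prism `Σ₂` for the stabiliser of `q∞` in `PU(2,1;ℤ[i√2])` acting on
the Heisenberg group: the convex hull of its six vertices. -/
def Sigma2 : Set (ℂ × ℝ) :=
  convexHull ℝ
    ({(1 - (√2/2 : ℝ) * Complex.I, (√2 : ℝ)),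
      (1 + (√2/2 : ℝ) * Complex.I, (√2 : ℝ)),
      (-1 + (√2/2 : ℝ) * Complex.I, (√2 : ℝ)),
      (1 - (√2/2 : ℝ) * Complex.I, -(√2 : ℝ)),
      (1 + (√2/2 : ℝ) * Complex.I, -(√2 : ℝ)),
      (-1 + (√2/2 : ℝ) * Complex.I, -(√2 : ℝ))} : Set (ℂ × ℝ))

/-! In the coordinates `x = Re ζ`, `v = √2 Im ζ`, `u = t / √2` the prism `Σ₂` is the triangle
`x ≤ 1, v ≤ 1, 0 ≤ x + v` times the interval `|u| ≤ 1`, and the fourth power of the Cygan distance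
to each of the six centres is a polynomial. A point of the prism outside `B((0,0), 2)` has
`|x|, |u| ≥ 9/10` and `|v| ≥ 4/5`, so it lies near one of the six vertices `(1, ±1, ±1)`,
`(-1, 1, ±1)`, and each vertex lies well inside one of the five balls of squared radius 1. -/

open ComplexConjugate

theorem mem_cyganBall_iff {p : ℂ × ℝ} {ζ₀ : ℂ} {t₀ s : ℝ} (hs : 0 ≤ s) :
    p ∈ cyganBall ζ₀ t₀ s ↔
      (‖p.1 - ζ₀‖ ^ 2) ^ 2 + (p.2 - t₀ + 2 * (p.1 * conj ζ₀).im) ^ 2 < s ^ 2 := by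
  have hform : ((‖p.1 - ζ₀‖ ^ 2 : ℝ) : ℂ) + I * ((p.2 - t₀ : ℝ) : ℂ)
        + 2 * I * (((p.1 * conj ζ₀).im : ℝ) : ℂ)
      = ((‖p.1 - ζ₀‖ ^ 2 : ℝ) : ℂ) + ((p.2 - t₀ + 2 * (p.1 * conj ζ₀).im : ℝ) : ℂ) * I := by
    push_cast; ring
  rw [cyganBall, Set.mem_ofPred_eq, hform, ← sq_lt_sq₀ (norm_nonneg _) hs, norm_add_mul_I,
    Real.sq_sqrt (by positivity)]

/-- The fourth power of the Cygan distance from `(x + i v/√2, √2 u)` to `(a, √2 k)`. -/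
def gaugeSq (a k x v u : ℝ) : ℝ := ((x - a) ^ 2 + v ^ 2 / 2) ^ 2 + 2 * (u + a * v - k) ^ 2

theorem mem_cyganBall_of_gaugeSq_lt {p : ℂ × ℝ} {ζ₀ : ℂ} {t₀ s a k : ℝ} (hζ₀ : ζ₀ = a)
    (ht₀ : t₀ = k * √2) (hs : 0 ≤ s)
    (h : gaugeSq a k p.1.re (√2 * p.1.im) (p.2 / √2) < s ^ 2) : p ∈ cyganBall ζ₀ t₀ s := by
  subst hζ₀ ht₀
  set x := p.1.re
  set y := p.1.im
  have h2 : √2 ^ 2 = 2 := Real.sq_sqrt zero_le_two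
  have hv : (√2 * y) ^ 2 / 2 = y ^ 2 := by rw [mul_pow, h2]; ring
  have hu : p.2 / √2 + a * (√2 * y) - k = (p.2 - k * √2 + 2 * (y * a)) / √2 := by
    field_simp; rw [h2]; ring
  have hnorm : ‖p.1 - a‖ ^ 2 = (x - a) ^ 2 + y ^ 2 := by
    rw [Complex.sq_norm, normSq_apply]
    simp only [sub_re, ofReal_re, sub_im, ofReal_im, sub_zero, x, y]
    ring
  have him : (p.1 * conj (a : ℂ)).im = y * a := by simp [y]
  rw [mem_cyganBall_iff hs, hnorm, him]
  rwa [gaugeSq, hv, hu, div_pow, h2, mul_div_cancel₀ _ two_ne_zero] at h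

theorem gaugeSq_lt_one {a k x v u : ℝ} (hx : |x - a| ≤ 1 / 10) (hv : v ^ 2 ≤ 1)
    (hw : |u + a * v - k| ≤ 3 / 5) : gaugeSq a k x v u < 1 := by
  have hx2 : (x - a) ^ 2 ≤ 1 / 100 := by nlinarith [sq_abs (x - a), abs_nonneg (x - a)]
  have hw2 : (u + a * v - k) ^ 2 ≤ 9 / 25 := by
    nlinarith [sq_abs (u + a * v - k), abs_nonneg (u + a * v - k)]
  have hA : (x - a) ^ 2 + v ^ 2 / 2 ≤ 51 / 100 := by linarith
  have hA0 : 0 ≤ (x - a) ^ 2 + v ^ 2 / 2 := by positivity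
  unfold gaugeSq
  nlinarith

theorem le_abs_of_four_le_gaugeSq_origin {x v u : ℝ} (hx : x ^ 2 ≤ 1) (hv : v ^ 2 ≤ 1) (hu : u ^ 2 ≤ 1)
    (h : 4 ≤ gaugeSq 0 0 x v u) : 9 / 10 ≤ |x| ∧ 4 / 5 ≤ |v| ∧ 9 / 10 ≤ |u| := by
  simp only [gaugeSq, sub_zero, zero_mul, add_zero] at h
  have hA : x ^ 2 + v ^ 2 / 2 ≤ 3 / 2 := by linarith
  have hA0 : 0 ≤ x ^ 2 + v ^ 2 / 2 := by positivity
  have hA' : 4 / 3 ≤ x ^ 2 + v ^ 2 / 2 := by nlinarith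
  refine ⟨?_, ?_, ?_⟩
  · nlinarith [abs_nonneg x, sq_abs x]
  · nlinarith [abs_nonneg v, sq_abs v]
  · nlinarith [abs_nonneg u, sq_abs u]

theorem gaugeSq_lt_of_mem_prism {x v u : ℝ} (hx : x ≤ 1) (hv : v ≤ 1) (hxv : 0 ≤ x + v)
    (hu : |u| ≤ 1) :
    gaugeSq 0 0 x v u < 4 ∨ gaugeSq 1 0 x v u < 1 ∨ gaugeSq 1 2 x v u < 1 ∨
      gaugeSq 1 (-2) x v u < 1 ∨ gaugeSq (-1) 0 x v u < 1 ∨ gaugeSq (-1) (-2) x v u < 1 := by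
  by_cases h₀ : gaugeSq 0 0 x v u < 4
  · exact .inl h₀
  obtain ⟨hu₁, hu₂⟩ := abs_le.1 hu
  have hv₂ : v ^ 2 ≤ 1 := by nlinarith
  obtain ⟨hx', hv', hu'⟩ := le_abs_of_four_le_gaugeSq_origin (by nlinarith) hv₂ (by nlinarith)
    (not_lt.1 h₀)
  right
  rcases le_abs'.1 hx' with hx' | hx'
  · rcases le_abs'.1 hu' with hu' | hu'
    · exact .inr <| .inr <| .inr <| .inr <|
        gaugeSq_lt_one (abs_le.2 ⟨by linarith, by linarith⟩) hv₂
          (abs_le.2 ⟨by linarith, by linarith⟩)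
    · exact .inr <| .inr <| .inr <| .inl <|
        gaugeSq_lt_one (abs_le.2 ⟨by linarith, by linarith⟩) hv₂
          (abs_le.2 ⟨by linarith, by linarith⟩)
  · have hx₁ : |x - 1| ≤ 1 / 10 := abs_le.2 ⟨by linarith, by linarith⟩
    rcases le_abs'.1 hv' with hv' | hv' <;> rcases le_abs'.1 hu' with hu' | hu'
    · exact .inr <| .inr <| .inl <| gaugeSq_lt_one hx₁ hv₂ (abs_le.2 ⟨by linarith, by linarith⟩)
    · exact .inl <| gaugeSq_lt_one hx₁ hv₂ (abs_le.2 ⟨by linarith, by linarith⟩)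
    · exact .inl <| gaugeSq_lt_one hx₁ hv₂ (abs_le.2 ⟨by linarith, by linarith⟩)
    · exact .inr <| .inl <| gaugeSq_lt_one hx₁ hv₂ (abs_le.2 ⟨by linarith, by linarith⟩)

theorem convexHull_subset_setOf_le {E : Type*} [AddCommGroup E] [Module ℝ E] {s : Set E}
    (f : E →ₗ[ℝ] ℝ) {c : ℝ} (h : ∀ x ∈ s, f x ≤ c) : convexHull ℝ s ⊆ {x | f x ≤ c} :=
  convexHull_min h (convex_halfSpace_le f.isLinear c)

theorem prism_coords_of_mem_Sigma2 {p : ℂ × ℝ} (hp : p ∈ Sigma2) :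
    p.1.re ≤ 1 ∧ √2 * p.1.im ≤ 1 ∧ 0 ≤ p.1.re + √2 * p.1.im ∧ |p.2 / √2| ≤ 1 := by
  have h2 : √2 * √2 = 2 := Real.mul_self_sqrt zero_le_two
  have hs : 0 < √2 := by positivity
  let re : ℂ × ℝ →ₗ[ℝ] ℝ := Complex.reLm ∘ₗ LinearMap.fst ℝ ℂ ℝ
  let im : ℂ × ℝ →ₗ[ℝ] ℝ := Complex.imLm ∘ₗ LinearMap.fst ℝ ℂ ℝ
  let t : ℂ × ℝ →ₗ[ℝ] ℝ := LinearMap.snd ℝ ℂ ℝ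
  have bound := fun (f : ℂ × ℝ →ₗ[ℝ] ℝ) (c : ℝ) h => convexHull_subset_setOf_le f (c := c) h hp
  rw [abs_div, abs_of_pos hs, div_le_one hs]
  refine ⟨bound re 1 ?_, bound (√2 • im) 1 ?_, neg_nonpos.1 (bound (-(re + √2 • im)) 0 ?_),
    abs_le.2 ⟨neg_le.1 (bound (-t) √2 ?_), bound t √2 ?_⟩⟩
  all_goals
    rintro q (rfl | rfl | rfl | rfl | rfl | rfl) <;> simp [re, im, t] <;> linarith

/-- **Proposition 5.1 of the paper**: the prism `Σ₂` is contained in the union of the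
interiors of the six spinal spheres `S₀`, `S₁`, `T(S₁)`, `T⁻¹(S₁)`, `R₁(S₁)` and
`T⁻¹R₁(S₁)`, i.e. in the union of the corresponding six open Cygan balls. -/
theorem Sigma2_subset_union_cyganBalls :
    Sigma2 ⊆
      cyganBall 0 0 2 ∪ cyganBall 1 0 1 ∪ cyganBall 1 (2*√2) 1 ∪
        cyganBall 1 (-(2*√2)) 1 ∪ cyganBall (-1) 0 1 ∪ cyganBall (-1) (-(2*√2)) 1 := by
  intro p hp
  obtain ⟨hx, hv, hxv, hu⟩ := prism_coords_of_mem_Sigma2 hp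
  simp only [Set.mem_union]
  rcases gaugeSq_lt_of_mem_prism hx hv hxv hu with h | h | h | h | h | h
  · refine .inl <| .inl <| .inl <| .inl <| .inl ?_
    exact mem_cyganBall_of_gaugeSq_lt (a := 0) (k := 0) (by simp) (by simp)
      (by norm_num) (by linarith)
  · refine .inl <| .inl <| .inl <| .inl <| .inr ?_
    exact mem_cyganBall_of_gaugeSq_lt (a := 1) (k := 0) (by simp) (by simp)
      (by norm_num) (by linarith)
  · refine .inl <| .inl <| .inl <| .inr ?_
    exact mem_cyganBall_of_gaugeSq_lt (a := 1) (k := 2) (by simp) (by simp)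
      (by norm_num) (by linarith)
  · refine .inl <| .inl <| .inr ?_
    exact mem_cyganBall_of_gaugeSq_lt (a := 1) (k := -2) (by simp) (by simp)
      (by norm_num) (by linarith)
  · refine .inl <| .inr ?_
    exact mem_cyganBall_of_gaugeSq_lt (a := -1) (k := 0) (by simp) (by simp)
      (by norm_num) (by linarith)
  · refine .inr ?_
    exact mem_cyganBall_of_gaugeSq_lt (a := -1) (k := -2) (by simp) (by simp)
      (by norm_num) (by linarith)

end
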